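/- arXiv:2308.08045 — 4 statements merged into one kernel-verified Lean document; each statement's English description precedes it below -/
import Mathlib

section
/- In a resource allocation game, removing from each player's action set all actions except two designated ones (one from a welfare-optimal allocation and one from a worst k-strong Nash equilibrium) yields a game in which the original equilibrium action profile remains a k-strong Nash equilibrium and the original optimal profile remains optimal, so the k-strong price of anarchy of the restricted game is at most that of the original game. -/
open Finset

/-- Number of players selecting resource `r` under joint action `a`. -/
def usage {n : ℕ} {R : Type*} [Fintype R] [DecidableEq R]
    (a : Fin n → Finset R) (r : R) : ℕ :=
  (Finset.univ.filter fun i => r ∈ a i).card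

/-- Welfare of a resource allocation game: `W(a) = Σ_r v_r · w(|a|_r)`. -/
noncomputable def Welf {n : ℕ} {R : Type*} [Fintype R] [DecidableEq R]
    (v : R → ℝ) (w : ℕ → ℝ) (a : Fin n → Finset R) : ℝ :=
  ∑ r, v r * w (usage a r)

/-- `a` is a `k`-strong Nash equilibrium of the common-interest game with
payoff `W`, with joint actions constrained to satisfy `P`: `a` is feasible and
no coalition of at most `k` players has a feasible joint deviation strictly
increasing `W`. -/
def kSNEon {n : ℕ} {α : Type*} (P : (Fin n → α) → Prop)
    (W : (Fin n → α) → ℝ) (k : ℕ) (a : Fin n → α) : Prop :=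
  P a ∧ ∀ a' : Fin n → α, P a' → ∀ Γ : Finset (Fin n), Γ.card ≤ k →
    (∀ i, i ∉ Γ → a' i = a i) → W a' ≤ W a

/-- The `k`-strong price of anarchy of the game with feasible joint actions
`P` and welfare `W`: worst `k`-strong equilibrium welfare over optimal
welfare. -/
noncomputable def SPoAon {n : ℕ} {α : Type*} (P : (Fin n → α) → Prop)
    (W : (Fin n → α) → ℝ) (k : ℕ) : ℝ :=
  sInf (W '' {a | kSNEon P W k a}) / sSup (W '' {a | P a})

/-- Restricting each player's action set to their optimal action `a*_i` and
their (worst) `k`-strong equilibrium action `â_i` keeps `â` a `k`-strong Nash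
equilibrium and keeps `a*` optimal, so the `k`-strong price of anarchy of the
restricted game is at most that of the original game. -/
theorem restrict_to_two_actions {n : ℕ} {R : Type*} [Fintype R] [DecidableEq R]
    (v : R → ℝ) (hv : ∀ r, 0 ≤ v r) (w : ℕ → ℝ) (hw0 : w 0 = 0)
    (A : Fin n → Set (Finset R)) (k : ℕ)
    (astar ahat : Fin n → Finset R)
    (hstar : ∀ i, astar i ∈ A i)
    (hopt : ∀ a : Fin n → Finset R, (∀ i, a i ∈ A i) → Welf v w a ≤ Welf v w astar)
    (hne : kSNEon (fun a => ∀ i, a i ∈ A i) (Welf v w) k ahat)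
    (hworst : ∀ a : Fin n → Finset R,
      kSNEon (fun a => ∀ i, a i ∈ A i) (Welf v w) k a → Welf v w ahat ≤ Welf v w a)
    (hpos : 0 < Welf v w astar) :
    kSNEon (fun a => ∀ i, a i = astar i ∨ a i = ahat i) (Welf v w) k ahat ∧
    (∀ a : Fin n → Finset R, (∀ i, a i = astar i ∨ a i = ahat i) →
      Welf v w a ≤ Welf v w astar) ∧
    SPoAon (fun a : Fin n → Finset R => ∀ i, a i = astar i ∨ a i = ahat i) (Welf v w) k ≤
      SPoAon (fun a => ∀ i, a i ∈ A i) (Welf v w) k := by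
  have hin : ∀ i, ahat i ∈ A i := hne.1
  have hsub : ∀ a : Fin n → Finset R, (∀ i, a i = astar i ∨ a i = ahat i) →
      ∀ i, a i ∈ A i := by
    intro a h i
    rcases h i with e | e <;> rw [e]
    exacts [hstar i, hin i]
  have h1 : kSNEon (fun a => ∀ i, a i = astar i ∨ a i = ahat i) (Welf v w) k ahat :=
    ⟨fun i => Or.inr rfl, fun a' ha' Γ hΓ hfix => hne.2 a' (hsub a' ha') Γ hΓ hfix⟩
  have h2 : ∀ a : Fin n → Finset R, (∀ i, a i = astar i ∨ a i = ahat i) →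
      Welf v w a ≤ Welf v w astar := fun a h => hopt a (hsub a h)
  refine ⟨h1, h2, ?_⟩
  have hgr : IsGreatest (Welf v w '' {a | ∀ i, a i = astar i ∨ a i = ahat i})
      (Welf v w astar) :=
    ⟨⟨astar, fun i => Or.inl rfl, rfl⟩, by rintro x ⟨a, ha, rfl⟩; exact h2 a ha⟩
  have hgo : IsGreatest (Welf v w '' {a | ∀ i, a i ∈ A i}) (Welf v w astar) :=
    ⟨⟨astar, hstar, rfl⟩, by rintro x ⟨a, ha, rfl⟩; exact hopt a ha⟩
  have hlo : IsLeast (Welf v w '' {a | kSNEon (fun a => ∀ i, a i ∈ A i) (Welf v w) k a})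
      (Welf v w ahat) :=
    ⟨⟨ahat, hne, rfl⟩, by rintro x ⟨a, ha, rfl⟩; exact hworst a ha⟩
  have hinf_r : sInf (Welf v w ''
      {a | kSNEon (fun a => ∀ i, a i = astar i ∨ a i = ahat i) (Welf v w) k a}) ≤
      Welf v w ahat :=
    csInf_le ((Set.toFinite _).image _).bddBelow ⟨ahat, h1, rfl⟩
  rw [SPoAon, SPoAon, hgr.csSup_eq, hgo.csSup_eq, hlo.csInf_eq]
  exact div_le_div_of_nonneg_right hinf_r hpos.le
end

section
/- In a covering resource allocation game (w(x) = 1 if x > 0, w(0) = 0), every Nash equilibrium (i.e., 1-strong Nash equilibrium) achieves welfare at least half of the optimal welfare: W(â) ≥ (1/2) · max_a W(a). -/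
open Finset

lemma usage_pos_of_mem {n : ℕ} {R : Type*} [Fintype R] [DecidableEq R]
    {a : Fin n → Finset R} {r : R} {i : Fin n} (h : r ∈ a i) : 0 < usage a r :=
  Finset.card_pos.mpr ⟨i, Finset.mem_filter.mpr ⟨Finset.mem_univ i, h⟩⟩

lemma exists_mem_of_usage_pos {n : ℕ} {R : Type*} [Fintype R] [DecidableEq R]
    {a : Fin n → Finset R} {r : R} (h : 0 < usage a r) : ∃ i, r ∈ a i := by
  obtain ⟨i, hi⟩ := Finset.card_pos.mp h
  exact ⟨i, (Finset.mem_filter.mp hi).2⟩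

lemma sum_ite_mem_eq {n : ℕ} {R : Type*} [Fintype R] [DecidableEq R]
    (a : Fin n → Finset R) (r : R) (c : ℝ) :
    (∑ i : Fin n, if r ∈ a i then c else 0) = (usage a r : ℝ) * c := by
  rw [← Finset.sum_filter]
  simp [usage, Finset.sum_const, nsmul_eq_mul]

/-- In a covering game (`w(x) = 1` if `x > 0`, `w(0) = 0`), every Nash
equilibrium (i.e. `1`-strong Nash equilibrium) of the common-interest game
achieves at least half of the optimal welfare. -/
theorem covering_NE_half_optimal {n : ℕ} {R : Type*} [Fintype R] [DecidableEq R]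
    (v : R → ℝ) (hv : ∀ r, 0 ≤ v r)
    (A : Fin n → Set (Finset R))
    (ahat : Fin n → Finset R)
    (hne : kSNEon (fun a => ∀ i, a i ∈ A i)
      (Welf v (fun x => if 0 < x then 1 else 0)) 1 ahat) :
    ∀ a : Fin n → Finset R, (∀ i, a i ∈ A i) →
      (1 / 2) * Welf v (fun x => if 0 < x then 1 else 0) a ≤
        Welf v (fun x => if 0 < x then 1 else 0) ahat := by
  intro a ha
  set w : ℕ → ℝ := fun x => if 0 < x then 1 else 0 with hw
  have hw0 : ∀ x, 0 ≤ w x := by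
    intro x; simp only [hw]; split <;> norm_num
  have hwpos : ∀ x, 0 < x → w x = 1 := by
    intro x hx; simp [hw, hx]
  have hwzero : w 0 = 0 := by simp [hw]
  obtain ⟨hfeas, hstab⟩ := hne
  -- For each player i, the Nash condition gives: the "gain" ≤ the "loss".
  have key : ∀ i : Fin n,
      (∑ r, if usage ahat r = 0 ∧ r ∈ a i then v r else 0)
      ≤ ∑ r, if usage ahat r = 1 ∧ r ∈ ahat i then v r else 0 := by
    intro i
    set b := Function.update ahat i (a i) with hb
    have hbi : b i = a i := Function.update_self i (a i) ahat
    have hbj : ∀ j, j ≠ i → b j = ahat j := fun j hj =>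
      Function.update_of_ne hj (a i) ahat
    have hbf : ∀ j, b j ∈ A j := by
      intro j
      rcases eq_or_ne j i with rfl | h
      · rw [hbi]; exact ha j
      · rw [hbj j h]; exact hfeas j
    have hNE : Welf v w b ≤ Welf v w ahat := by
      refine hstab b hbf {i} (by simp) ?_
      intro j hj
      exact hbj j (by simpa using hj)
    have hpt : ∀ r, v r * w (usage ahat r)
        + (if usage ahat r = 0 ∧ r ∈ a i then v r else 0)
        - (if usage ahat r = 1 ∧ r ∈ ahat i then v r else 0)
        ≤ v r * w (usage b r) := by
      intro r
      have hvr := hv r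
      have hbn : 0 ≤ v r * w (usage b r) := mul_nonneg hvr (hw0 _)
      rcases Nat.eq_zero_or_pos (usage ahat r) with h0 | hpos
      · by_cases hra : r ∈ a i
        · have hub : 0 < usage b r := usage_pos_of_mem (i := i) (by rw [hbi]; exact hra)
          rw [h0, hwzero, hwpos _ hub, if_pos ⟨rfl, hra⟩, if_neg (by simp [h0])]
          ring_nf
          linarith
        · rw [h0, hwzero, if_neg (by tauto), if_neg (by simp [h0])]
          linarith
      · have hwa : w (usage ahat r) = 1 := hwpos _ hpos
        have h0ne : ¬ (usage ahat r = 0 ∧ r ∈ a i) := by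
          rintro ⟨h, -⟩; omega
        by_cases hc : usage ahat r = 1 ∧ r ∈ ahat i
        · rw [hwa, if_neg h0ne, if_pos hc]
          linarith
        · have hub : 0 < usage b r := by
            by_cases hmem : r ∈ ahat i
            · have h2 : 2 ≤ usage ahat r := by
                rcases Nat.lt_or_ge (usage ahat r) 2 with hlt | hge
                · exact absurd ⟨by omega, hmem⟩ hc
                · exact hge
              obtain ⟨j, hj, k, hk, hjk⟩ := Finset.one_lt_card.mp h2
              have hj' : r ∈ ahat j := (Finset.mem_filter.mp hj).2
              have hk' : r ∈ ahat k := (Finset.mem_filter.mp hk).2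
              rcases eq_or_ne j i with rfl | hji
              · exact usage_pos_of_mem (i := k)
                  (by rw [hbj k (Ne.symm hjk)]; exact hk')
              · exact usage_pos_of_mem (i := j) (by rw [hbj j hji]; exact hj')
            · obtain ⟨j, hj⟩ := exists_mem_of_usage_pos hpos
              have hji : j ≠ i := fun h => hmem (h ▸ hj)
              exact usage_pos_of_mem (i := j) (by rw [hbj j hji]; exact hj)
          rw [hwa, hwpos _ hub, if_neg h0ne, if_neg hc]
          linarith
    have hsum : Welf v w ahat
        + (∑ r, if usage ahat r = 0 ∧ r ∈ a i then v r else 0)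
        - (∑ r, if usage ahat r = 1 ∧ r ∈ ahat i then v r else 0)
        ≤ Welf v w b := by
      have := Finset.sum_le_sum (fun r (_ : r ∈ Finset.univ) => hpt r)
      simpa [Welf, Finset.sum_add_distrib, Finset.sum_sub_distrib] using this
    linarith
  -- Sum the per-player inequalities
  have hGL : (∑ i, ∑ r, if usage ahat r = 0 ∧ r ∈ a i then v r else 0)
      ≤ ∑ i, ∑ r, if usage ahat r = 1 ∧ r ∈ ahat i then v r else 0 :=
    Finset.sum_le_sum fun i _ => key i
  -- The total "loss" is at most the equilibrium welfare
  have hL : (∑ i, ∑ r, if usage ahat r = 1 ∧ r ∈ ahat i then v r else 0)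
      ≤ Welf v w ahat := by
    rw [Finset.sum_comm]
    refine Finset.sum_le_sum fun r _ => ?_
    by_cases h1 : usage ahat r = 1
    · have : (∑ i : Fin n, if usage ahat r = 1 ∧ r ∈ ahat i then v r else 0)
          = (usage ahat r : ℝ) * v r := by
        rw [← sum_ite_mem_eq ahat r (v r)]
        exact Finset.sum_congr rfl fun i _ => by simp [h1]
      rw [this, h1, hwpos 1 one_pos]
      simp
    · have : (∑ i : Fin n, if usage ahat r = 1 ∧ r ∈ ahat i then v r else 0) = 0 :=
        Finset.sum_eq_zero fun i _ => by simp [h1]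
      rw [this]
      exact mul_nonneg (hv r) (hw0 _)
  -- The optimal welfare is at most equilibrium welfare plus the total "gain"
  have hG : Welf v w a ≤ Welf v w ahat
      + ∑ i, ∑ r, if usage ahat r = 0 ∧ r ∈ a i then v r else 0 := by
    rw [Finset.sum_comm, Welf, Welf, ← Finset.sum_add_distrib]
    refine Finset.sum_le_sum fun r _ => ?_
    have hvr := hv r
    rcases Nat.eq_zero_or_pos (usage a r) with h0 | hpos
    · rw [h0, hwzero]
      have h1 : 0 ≤ v r * w (usage ahat r) := mul_nonneg hvr (hw0 _)
      have h2 : 0 ≤ ∑ i : Fin n, if usage ahat r = 0 ∧ r ∈ a i then v r else 0 :=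
        Finset.sum_nonneg fun i _ => by split <;> simp [hvr]
      linarith
    · rw [hwpos _ hpos]
      rcases Nat.eq_zero_or_pos (usage ahat r) with hz | hp
      · obtain ⟨j, hj⟩ := exists_mem_of_usage_pos hpos
        have h2 : v r ≤ ∑ i : Fin n, if usage ahat r = 0 ∧ r ∈ a i then v r else 0 := by
          refine le_trans ?_ (Finset.single_le_sum
            (f := fun i : Fin n => if usage ahat r = 0 ∧ r ∈ a i then v r else 0)
            (fun i _ => by split <;> simp [hvr]) (Finset.mem_univ j))
          simp [hz, hj]
        have h1 : 0 ≤ v r * w (usage ahat r) := mul_nonneg hvr (hw0 _)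
        linarith
      · rw [hwpos _ hp]
        have h2 : 0 ≤ ∑ i : Fin n, if usage ahat r = 0 ∧ r ∈ a i then v r else 0 :=
          Finset.sum_nonneg fun i _ => by split <;> simp [hvr]
        linarith
  linarith
end

section
/- For a two-action resource allocation game with label-parameterization θ, for any coalition Γ of size ζ, the sum over all ordered ζ-tuples of distinct players of the welfare after the tuple's members deviate to their optimal actions satisfies: Σ_{Γ ∈ P_ζ} W(a*_Γ, â_{-Γ}) = Σ_{(e,x,o)} θ(e,x,o) Σ_{0≤α≤ζ, 0≤β≤ζ−α} C(ζ,α) C(ζ−α,β) e^{(α)} o^{(β)} (n−e−o)^{(ζ−α−β)} w(e+x+β−α), where terms with e+x+β−α < 0 have zero coefficient. -/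
open Finset

/-- `e_r`: number of players using `r` only in their equilibrium action. -/
def labelE {n : ℕ} {R : Type*} [Fintype R] [DecidableEq R]
    (astar ahat : Fin n → Finset R) (r : R) : ℕ :=
  (Finset.univ.filter fun i => r ∈ ahat i ∧ r ∉ astar i).card

/-- `x_r`: number of players using `r` in both actions. -/
def labelX {n : ℕ} {R : Type*} [Fintype R] [DecidableEq R]
    (astar ahat : Fin n → Finset R) (r : R) : ℕ :=
  (Finset.univ.filter fun i => r ∈ ahat i ∧ r ∈ astar i).card

/-- `o_r`: number of players using `r` only in their optimal action. -/
def labelO {n : ℕ} {R : Type*} [Fintype R] [DecidableEq R]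
    (astar ahat : Fin n → Finset R) (r : R) : ℕ :=
  (Finset.univ.filter fun i => r ∉ ahat i ∧ r ∈ astar i).card

/-- `θ(e,x,o)`: total value of resources with label `(e,x,o)`. -/
noncomputable def theta {n : ℕ} {R : Type*} [Fintype R] [DecidableEq R]
    (v : R → ℝ) (astar ahat : Fin n → Finset R) (e x o : ℕ) : ℝ :=
  ∑ r ∈ Finset.univ.filter (fun r =>
      labelE astar ahat r = e ∧ labelX astar ahat r = x ∧ labelO astar ahat r = o), v r

/-- The index set of labels: `(e,x,o)` with `1 ≤ e+x+o ≤ n`. -/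
def Iset (n : ℕ) : Finset (ℕ × ℕ × ℕ) :=
  ((Finset.range (n + 1)) ×ˢ (Finset.range (n + 1)) ×ˢ (Finset.range (n + 1))).filter
    (fun p => 1 ≤ p.1 + p.2.1 + p.2.2 ∧ p.1 + p.2.1 + p.2.2 ≤ n)

/-- The joint action where the members of the ordered coalition `f` play their
optimal actions and everyone else plays their equilibrium action. -/
def devProf {n : ℕ} {α : Type*} (astar ahat : Fin n → α) {ζ : ℕ}
    (f : Fin ζ ↪ Fin n) : Fin n → α :=
  fun i => if ∃ j, f j = i then astar i else ahat i

/-! ### Auxiliary definitions and lemmas -/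

/-- Deviation profile determined by a *set* of deviating players. -/
def devS {n : ℕ} {R : Type*} (astar ahat : Fin n → Finset R) (S : Finset (Fin n)) :
    Fin n → Finset R :=
  fun i => if i ∈ S then astar i else ahat i

/-- Players using `r` only in equilibrium. -/
def Eset {n : ℕ} {R : Type*} [Fintype R] [DecidableEq R]
    (astar ahat : Fin n → Finset R) (r : R) : Finset (Fin n) :=
  Finset.univ.filter fun i => r ∈ ahat i ∧ r ∉ astar i

/-- Players using `r` only in the optimal action. -/
def Oset {n : ℕ} {R : Type*} [Fintype R] [DecidableEq R]
    (astar ahat : Fin n → Finset R) (r : R) : Finset (Fin n) :=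
  Finset.univ.filter fun i => r ∉ ahat i ∧ r ∈ astar i

/-- The inner coefficient sum appearing on the right-hand side. -/
noncomputable def cf (n ζ : ℕ) (w : ℕ → ℝ) (e x o : ℕ) : ℝ :=
  ∑ a ∈ Finset.range (ζ + 1), ∑ b ∈ Finset.range (ζ - a + 1),
    ((ζ.choose a * (ζ - a).choose b * e.descFactorial a *
      o.descFactorial b *
      (n - e - o).descFactorial (ζ - a - b) : ℕ) : ℝ) *
      w (e + x + b - a)

lemma aux_partition {n : ℕ} (E O S : Finset (Fin n)) (hEO : Disjoint E O) :
    (S ∩ E).card + (S ∩ O).card + (S \ (E ∪ O)).card = S.card := by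
  have hE : S ∩ E = S.filter (fun i => i ∈ E) := by ext i; simp [and_comm]
  have hO : S ∩ O = S.filter (fun i => i ∈ O) := by ext i; simp [and_comm]
  have hN : S \ (E ∪ O) = S.filter (fun i => ¬(i ∈ E ∨ i ∈ O)) := by ext i; simp
  rw [hE, hO, hN, card_filter, card_filter, card_filter, ← sum_add_distrib, ← sum_add_distrib,
    card_eq_sum_ones]
  apply sum_congr rfl
  intro i _
  have hd : i ∈ E → i ∉ O := fun h h' => disjoint_left.mp hEO h h'
  by_cases h1 : i ∈ E <;> by_cases h2 : i ∈ O <;> simp [h1, h2] <;> tauto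

lemma aux_union_inter {n : ℕ} {E O A B C : Finset (Fin n)} (hEO : Disjoint E O)
    (hA : A ⊆ E) (hB : B ⊆ O) (hC : C ⊆ univ \ (E ∪ O)) :
    (A ∪ B ∪ C) ∩ E = A ∧ (A ∪ B ∪ C) ∩ O = B ∧ (A ∪ B ∪ C) \ (E ∪ O) = C := by
  have hBE : ∀ i ∈ B, i ∉ E := fun i hi h => disjoint_left.mp hEO h (hB hi)
  have hAO : ∀ i ∈ A, i ∉ O := fun i hi h => disjoint_left.mp hEO (hA hi) h
  have hCE : ∀ i ∈ C, i ∉ E ∧ i ∉ O := by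
    intro i hi
    have := hC hi
    simp only [mem_sdiff, mem_union] at this
    tauto
  refine ⟨?_, ?_, ?_⟩ <;> ext i <;>
    simp only [mem_inter, mem_union, mem_sdiff]
  · have h1 := hBE i; have h2 := hCE i; have h3 : i ∈ A → i ∈ E := fun h => hA h; tauto
  · have h1 := hAO i; have h2 := hCE i; have h3 : i ∈ B → i ∈ O := fun h => hB h; tauto
  · have h1 : i ∈ A → i ∈ E := fun h => hA h; have h2 : i ∈ B → i ∈ O := fun h => hB h
    have h3 := hCE i; tauto

lemma aux_count {n ζ a b : ℕ} (E O : Finset (Fin n)) (hEO : Disjoint E O) (hab : a + b ≤ ζ) :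
    ((powersetCard ζ (univ : Finset (Fin n))).filter
      fun S => (S ∩ E).card = a ∧ (S ∩ O).card = b).card
    = E.card.choose a * O.card.choose b * (n - E.card - O.card).choose (ζ - a - b) := by
  have hNcard : (univ \ (E ∪ O) : Finset (Fin n)).card = n - E.card - O.card := by
    rw [card_sdiff_of_subset (subset_univ _), card_union_of_disjoint hEO, card_univ, Fintype.card_fin,
      Nat.sub_sub]
  rw [← hNcard, ← card_powersetCard, ← card_powersetCard, ← card_powersetCard,
    ← card_product, ← card_product]
  apply card_nbij' (fun S => ((S ∩ E, S ∩ O), S \ (E ∪ O)))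
    (fun p => p.1.1 ∪ p.1.2 ∪ p.2)
  · intro S hS
    simp only [mem_coe, mem_filter, mem_powersetCard] at hS
    obtain ⟨⟨-, hcard⟩, ha, hb⟩ := hS
    have hpart := aux_partition E O S hEO
    simp only [mem_coe, mem_product, mem_powersetCard]
    refine ⟨⟨⟨inter_subset_right, ha⟩, inter_subset_right, hb⟩,
      sdiff_subset_sdiff (subset_univ _) le_rfl, by omega⟩
  · rintro ⟨⟨A, B⟩, C⟩ hp
    simp only [mem_coe, mem_product, mem_powersetCard] at hp
    obtain ⟨⟨⟨hA, hAc⟩, hB, hBc⟩, hC, hCc⟩ := hp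
    obtain ⟨h1, h2, h3⟩ := aux_union_inter hEO hA hB hC
    have hdAB : Disjoint A B := hEO.mono hA hB
    have hdC : Disjoint (A ∪ B) C := by
      rw [disjoint_left]
      intro i hi hiC
      have h' := hC hiC
      simp only [mem_sdiff, mem_union] at h' hi
      rcases hi with h | h
      · exact h'.2 (Or.inl (hA h))
      · exact h'.2 (Or.inr (hB h))
    simp only [mem_coe, mem_filter, mem_powersetCard]
    refine ⟨⟨subset_univ _, ?_⟩, by rw [h1]; exact hAc, by rw [h2]; exact hBc⟩
    rw [card_union_of_disjoint hdC, card_union_of_disjoint hdAB, hAc, hBc, hCc]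
    omega
  · intro S hS
    simp only [mem_coe, mem_filter, mem_powersetCard] at hS
    ext i
    simp only [mem_union, mem_inter, mem_sdiff]
    tauto
  · rintro ⟨⟨A, B⟩, C⟩ hp
    simp only [mem_coe, mem_product, mem_powersetCard] at hp
    obtain ⟨⟨⟨hA, hAc⟩, hB, hBc⟩, hC, hCc⟩ := hp
    obtain ⟨h1, h2, h3⟩ := aux_union_inter hEO hA hB hC
    simp only [Prod.mk.injEq]; exact ⟨⟨h1, h2⟩, h3⟩

lemma aux_empty {n ζ a b : ℕ} (E O : Finset (Fin n)) (hEO : Disjoint E O) (hab : ζ < a + b) :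
    ((powersetCard ζ (univ : Finset (Fin n))).filter
      fun S => (S ∩ E).card = a ∧ (S ∩ O).card = b) = ∅ := by
  rw [filter_eq_empty_iff]
  intro S hS
  rintro ⟨ha, hb⟩
  rw [mem_powersetCard] at hS
  have := aux_partition E O S hEO
  omega

lemma aux_fibcard {n ζ : ℕ} (S : Finset (Fin n)) (hS : S.card = ζ) :
    ((univ : Finset (Fin ζ ↪ Fin n)).filter fun f => univ.map f = S).card = Nat.factorial ζ := by
  have key : ((univ : Finset (Fin ζ ↪ {x // x ∈ S})).card)
      = ((univ : Finset (Fin ζ ↪ Fin n)).filter fun f => univ.map f = S).card := by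
    apply card_nbij (fun g => g.trans (Function.Embedding.subtype fun x => x ∈ S))
    · intro g _
      simp only [mem_coe, mem_filter, mem_univ, true_and]
      apply eq_of_subset_of_card_le
      · intro x hx
        simp only [mem_map] at hx
        obtain ⟨j, -, rfl⟩ := hx
        exact (g j).2
      · rw [card_map, Finset.card_univ, Fintype.card_fin, hS]
    · intro g _ g' _ h
      exact Function.Embedding.ext fun j => Subtype.ext (by simpa using DFunLike.congr_fun h j)
    · intro f hf
      simp only [coe_filter, Set.mem_setOf_eq] at hf
      obtain ⟨-, hmap⟩ := hf
      have hmem : ∀ j, f j ∈ S := by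
        intro j; rw [← hmap]; exact mem_map_of_mem f (mem_univ j)
      refine ⟨⟨fun j => ⟨f j, hmem j⟩, fun j k h => f.injective (congrArg Subtype.val h)⟩,
        by simp, ?_⟩
      ext j
      rfl
  rw [← key, Finset.card_univ, Fintype.card_embedding_eq, Fintype.card_coe, hS, Fintype.card_fin,
    Nat.descFactorial_self]

lemma aux_emb {n ζ : ℕ} (F : Finset (Fin n) → ℝ) :
    ∑ f : Fin ζ ↪ Fin n, F (univ.map f)
      = ∑ S ∈ powersetCard ζ (univ : Finset (Fin n)), (Nat.factorial ζ : ℝ) * F S := by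
  have h := sum_fiberwise_eq_sum_filter' (univ : Finset (Fin ζ ↪ Fin n))
    (powersetCard ζ (univ : Finset (Fin n))) (fun f => univ.map f) F
  rw [filter_true_of_mem (fun f _ => by
    simp only [mem_powersetCard]
    exact ⟨subset_univ _, by rw [card_map, Finset.card_univ, Fintype.card_fin]⟩)] at h
  rw [← h]
  apply sum_congr rfl
  intro S hS
  rw [sum_const, aux_fibcard S (mem_powersetCard.mp hS).2, nsmul_eq_mul]

lemma aux_subset_sum {n ζ : ℕ} (E O : Finset (Fin n)) (hEO : Disjoint E O) (g : ℕ → ℕ → ℝ) :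
    ∑ S ∈ powersetCard ζ (univ : Finset (Fin n)), g (S ∩ E).card (S ∩ O).card
      = ∑ a ∈ range (ζ + 1), ∑ b ∈ range (ζ - a + 1),
          ((E.card.choose a * O.card.choose b
            * (n - E.card - O.card).choose (ζ - a - b) : ℕ) : ℝ) * g a b := by
  have h := sum_fiberwise_eq_sum_filter' (powersetCard ζ (univ : Finset (Fin n)))
    ((range (ζ + 1)) ×ˢ (range (ζ + 1)))
    (fun S => ((S ∩ E).card, (S ∩ O).card)) (fun p => g p.1 p.2)
  rw [filter_true_of_mem (fun S hS => by
    have hc := (mem_powersetCard.mp hS).2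
    simp only [mem_product, mem_range]
    constructor
    · exact Nat.lt_succ_of_le (hc ▸ card_le_card inter_subset_left)
    · exact Nat.lt_succ_of_le (hc ▸ card_le_card inter_subset_left))] at h
  rw [← h, Finset.sum_product]
  apply sum_congr rfl
  intro a ha
  rw [mem_range, Nat.lt_succ_iff] at ha
  have hzero : ∀ b ∈ range (ζ + 1), b ∉ range (ζ - a + 1) →
      (∑ S ∈ (powersetCard ζ (univ : Finset (Fin n))).filter
        (fun S => ((S ∩ E).card, (S ∩ O).card) = (a, b)), g a b) = 0 := by
    intro b hb hnb
    rw [mem_range, Nat.lt_succ_iff] at hnb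
    have hfil : (powersetCard ζ (univ : Finset (Fin n))).filter
        (fun S => ((S ∩ E).card, (S ∩ O).card) = (a, b))
        = (powersetCard ζ (univ : Finset (Fin n))).filter
          (fun S => (S ∩ E).card = a ∧ (S ∩ O).card = b) := by
      apply filter_congr
      intro S _
      simp [Prod.ext_iff]
    rw [hfil, aux_empty E O hEO (by omega), sum_empty]
  rw [← sum_subset (range_subset_range.mpr (by omega : ζ - a + 1 ≤ ζ + 1)) hzero]
  apply sum_congr rfl
  intro b hb
  rw [mem_range, Nat.lt_succ_iff] at hb
  have hfil : (powersetCard ζ (univ : Finset (Fin n))).filter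
      (fun S => ((S ∩ E).card, (S ∩ O).card) = (a, b))
      = (powersetCard ζ (univ : Finset (Fin n))).filter
        (fun S => (S ∩ E).card = a ∧ (S ∩ O).card = b) := by
    apply filter_congr
    intro S _
    simp [Prod.ext_iff]
  rw [hfil, sum_const, aux_count E O hEO (by omega), nsmul_eq_mul]

lemma usage_devS {n : ℕ} {R : Type*} [Fintype R] [DecidableEq R]
    (astar ahat : Fin n → Finset R) (r : R) (S : Finset (Fin n)) :
    usage (devS astar ahat S) r + (S ∩ Eset astar ahat r).card
      = labelE astar ahat r + labelX astar ahat r + (S ∩ Oset astar ahat r).card := by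
  have hE : S ∩ Eset astar ahat r
      = Finset.univ.filter (fun i => i ∈ S ∧ (r ∈ ahat i ∧ r ∉ astar i)) := by
    ext i; simp [Eset]
  have hO : S ∩ Oset astar ahat r
      = Finset.univ.filter (fun i => i ∈ S ∧ (r ∉ ahat i ∧ r ∈ astar i)) := by
    ext i; simp [Oset]
  rw [hE, hO, usage, labelE, labelX, card_filter, card_filter, card_filter, card_filter,
    card_filter, ← sum_add_distrib, ← sum_add_distrib, ← sum_add_distrib]
  apply sum_congr rfl
  intro i _
  by_cases h1 : i ∈ S <;> by_cases h2 : r ∈ astar i <;> by_cases h3 : r ∈ ahat i <;>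
    simp [devS, h1, h2, h3]

lemma usage_devS' {n : ℕ} {R : Type*} [Fintype R] [DecidableEq R]
    (astar ahat : Fin n → Finset R) (r : R) (S : Finset (Fin n)) :
    usage (devS astar ahat S) r
      = labelE astar ahat r + labelX astar ahat r + (S ∩ Oset astar ahat r).card
        - (S ∩ Eset astar ahat r).card := by
  have h := usage_devS astar ahat r S
  omega

lemma devProf_eq_devS {n : ℕ} {R : Type*} (astar ahat : Fin n → Finset R) {ζ : ℕ}
    (f : Fin ζ ↪ Fin n) :
    devProf astar ahat f = devS astar ahat (univ.map f) := by
  funext i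
  simp [devProf, devS, mem_map]

lemma aux_coef {a b ζ e o N : ℕ} (ha : a ≤ ζ) (hb : b ≤ ζ - a) :
    Nat.factorial ζ * (e.choose a * o.choose b * N.choose (ζ - a - b))
      = ζ.choose a * (ζ - a).choose b * e.descFactorial a * o.descFactorial b
        * N.descFactorial (ζ - a - b) := by
  rw [Nat.descFactorial_eq_factorial_mul_choose, Nat.descFactorial_eq_factorial_mul_choose,
    Nat.descFactorial_eq_factorial_mul_choose, ← Nat.choose_mul_factorial_mul_factorial ha,
    ← Nat.choose_mul_factorial_mul_factorial hb]
  ring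

lemma EO_disjoint {n : ℕ} {R : Type*} [Fintype R] [DecidableEq R]
    (astar ahat : Fin n → Finset R) (r : R) :
    Disjoint (Eset astar ahat r) (Oset astar ahat r) := by
  rw [disjoint_left]
  intro i hi hi'
  simp only [Eset, Oset, mem_filter] at hi hi'
  tauto

lemma per_resource {n : ℕ} {R : Type*} [Fintype R] [DecidableEq R]
    (astar ahat : Fin n → Finset R) (w : ℕ → ℝ) (ζ : ℕ) (r : R) :
    ∑ f : Fin ζ ↪ Fin n, w (usage (devProf astar ahat f) r)
      = cf n ζ w (labelE astar ahat r) (labelX astar ahat r) (labelO astar ahat r) := by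
  have h1 : ∑ f : Fin ζ ↪ Fin n, w (usage (devProf astar ahat f) r)
      = ∑ f : Fin ζ ↪ Fin n, w (usage (devS astar ahat (univ.map f)) r) := by
    apply sum_congr rfl
    intro f _
    rw [devProf_eq_devS]
  rw [h1, aux_emb (fun S => w (usage (devS astar ahat S) r))]
  have h2 : ∀ S : Finset (Fin n),
      (Nat.factorial ζ : ℝ) * w (usage (devS astar ahat S) r)
      = (fun a b => (Nat.factorial ζ : ℝ) *
          w (labelE astar ahat r + labelX astar ahat r + b - a))
          (S ∩ Eset astar ahat r).card (S ∩ Oset astar ahat r).card := by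
    intro S
    simp only
    rw [usage_devS']
  rw [sum_congr rfl (fun S _ => h2 S),
    aux_subset_sum (Eset astar ahat r) (Oset astar ahat r) (EO_disjoint astar ahat r)
      (fun a b => (Nat.factorial ζ : ℝ) *
        w (labelE astar ahat r + labelX astar ahat r + b - a))]
  have hEcard : (Eset astar ahat r).card = labelE astar ahat r := rfl
  have hOcard : (Oset astar ahat r).card = labelO astar ahat r := rfl
  rw [cf]
  apply sum_congr rfl
  intro a ha
  apply sum_congr rfl
  intro b hb
  rw [mem_range, Nat.lt_succ_iff] at ha hb
  rw [hEcard, hOcard, ← aux_coef ha hb]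
  push_cast
  ring

lemma label_sum_le {n : ℕ} {R : Type*} [Fintype R] [DecidableEq R]
    (astar ahat : Fin n → Finset R) (r : R) :
    labelE astar ahat r + labelX astar ahat r + labelO astar ahat r ≤ n := by
  rw [labelE, labelX, labelO, card_filter, card_filter, card_filter, ← sum_add_distrib,
    ← sum_add_distrib]
  calc _ ≤ ∑ _i : Fin n, 1 := by
        apply sum_le_sum
        intro i _
        by_cases h1 : r ∈ ahat i <;> by_cases h2 : r ∈ astar i <;> simp [h1, h2]
    _ = n := by simp

lemma cf_zero {n ζ : ℕ} (w : ℕ → ℝ) (hw0 : w 0 = 0) : cf n ζ w 0 0 0 = 0 := by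
  rw [cf]
  apply sum_eq_zero
  intro a _
  apply sum_eq_zero
  intro b _
  match a, b with
  | 0, 0 => simpa using Or.inr hw0
  | 0, b + 1 => simp [Nat.zero_descFactorial_succ]
  | a + 1, b => simp [Nat.zero_descFactorial_succ]

/-- Summing, over all ordered tuples `Γ` of `ζ` distinct players, the welfare
after the tuple's members deviate to their optimal actions:
`Σ_{Γ∈P_ζ} W(a*_Γ, â_{-Γ}) = Σ_{(e,x,o)} θ(e,x,o) Σ_{α,β}
C(ζ,α)C(ζ−α,β) e^{(α)} o^{(β)} (n−e−o)^{(ζ−α−β)} w(e+x+β−α)`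
(terms with `e+x+β−α < 0` have zero coefficient, so truncated subtraction is
harmless). -/
theorem deviation_welfare_sum {n : ℕ} {R : Type*} [Fintype R] [DecidableEq R]
    (v : R → ℝ) (hv : ∀ r, 0 ≤ v r) (w : ℕ → ℝ) (hw0 : w 0 = 0)
    (astar ahat : Fin n → Finset R) (ζ : ℕ) (hζ : ζ ≤ n) :
    ∑ f : Fin ζ ↪ Fin n, Welf v w (devProf astar ahat f) =
      ∑ p ∈ Iset n, theta v astar ahat p.1 p.2.1 p.2.2 *
        ∑ a ∈ Finset.range (ζ + 1), ∑ b ∈ Finset.range (ζ - a + 1),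
          ((ζ.choose a * (ζ - a).choose b * p.1.descFactorial a *
            p.2.2.descFactorial b *
            (n - p.1 - p.2.2).descFactorial (ζ - a - b) : ℕ) : ℝ) *
            w (p.1 + p.2.1 + b - a) := by
  have lhs_eq : ∑ f : Fin ζ ↪ Fin n, Welf v w (devProf astar ahat f)
      = ∑ r : R, v r *
          cf n ζ w (labelE astar ahat r) (labelX astar ahat r) (labelO astar ahat r) := by
    simp only [Welf]
    rw [Finset.sum_comm]
    apply sum_congr rfl
    intro r _
    rw [← mul_sum, per_resource]
  rw [lhs_eq]
  have rhs_eq : ∑ p ∈ Iset n, theta v astar ahat p.1 p.2.1 p.2.2 *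
        ∑ a ∈ Finset.range (ζ + 1), ∑ b ∈ Finset.range (ζ - a + 1),
          ((ζ.choose a * (ζ - a).choose b * p.1.descFactorial a *
            p.2.2.descFactorial b *
            (n - p.1 - p.2.2).descFactorial (ζ - a - b) : ℕ) : ℝ) *
            w (p.1 + p.2.1 + b - a)
      = ∑ p ∈ Iset n, theta v astar ahat p.1 p.2.1 p.2.2 * cf n ζ w p.1 p.2.1 p.2.2 := rfl
  rw [rhs_eq]
  -- regroup resources by label
  set lab := fun r : R => (labelE astar ahat r, labelX astar ahat r, labelO astar ahat r)
    with hlab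
  have htheta : ∀ p : ℕ × ℕ × ℕ, theta v astar ahat p.1 p.2.1 p.2.2
      = ∑ r ∈ univ.filter (fun r => lab r = p), v r := by
    intro p
    rw [theta]
    apply sum_congr _ (fun _ _ => rfl)
    apply filter_congr
    intro r _
    simp [hlab, Prod.ext_iff]
  have step1 : ∑ p ∈ Iset n, theta v astar ahat p.1 p.2.1 p.2.2 * cf n ζ w p.1 p.2.1 p.2.2
      = ∑ r ∈ univ.filter (fun r => lab r ∈ Iset n),
          v r * cf n ζ w (lab r).1 (lab r).2.1 (lab r).2.2 := by
    rw [← sum_fiberwise_eq_sum_filter]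
    apply sum_congr rfl
    intro p _
    rw [htheta, sum_mul]
    apply sum_congr rfl
    intro r hr
    rw [mem_filter] at hr
    rw [hr.2]
  rw [step1]
  symm
  apply sum_subset (filter_subset _ _)
  intro r _ hr
  rw [mem_filter] at hr
  push_neg at hr
  have hr' := hr (mem_univ r)
  have hle := label_sum_le astar ahat r
  have hzero : labelE astar ahat r = 0 ∧ labelX astar ahat r = 0 ∧ labelO astar ahat r = 0 := by
    by_contra hcon
    apply hr'
    simp only [Iset, mem_filter, mem_product, mem_range, hlab]
    refine ⟨⟨by omega, by omega, by omega⟩, by omega, by omega⟩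
  simp only [hlab, hzero.1, hzero.2.1, hzero.2.2]
  rw [cf_zero w hw0, mul_zero]
end

section
/- The linear program (P) is feasible and its optimal value is finite (bounded above), given that w(0) = 0 and w(y) > 0 for all y > 0. -/
open Finset

/-- The combinatorial coefficient
`C(ζ,α)·C(ζ−α,β)·e^{(α)}·o^{(β)}·(n−e−o)^{(ζ−α−β)}` (falling factorials). -/
def coefB (n ζ e o a b : ℕ) : ℕ :=
  ζ.choose a * (ζ - a).choose b * e.descFactorial a * o.descFactorial b *
    (n - e - o).descFactorial (ζ - a - b)

/-- The coefficient of `θ(e,x,o)` in the `ζ`-coalition equilibrium constraint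
of the linear program (P):
`n!/(n−ζ)!·w(e+x) − Σ_{α,β} B^{ζ,n}_{(e,x,o)}(α,β)·w(e+x+β−α)`
(terms with `e+x+β−α < 0` have zero coefficient). -/
noncomputable def eqCoef (n : ℕ) (w : ℕ → ℝ) (ζ : ℕ) (p : ℕ × ℕ × ℕ) : ℝ :=
  (n.descFactorial ζ : ℝ) * w (p.1 + p.2.1) -
    ∑ a ∈ Finset.range (ζ + 1), ∑ b ∈ Finset.range (ζ - a + 1),
      (coefB n ζ p.1 p.2.2 a b : ℝ) * w (p.1 + p.2.1 + b - a)

/-- Feasibility for the linear program (P): `θ ≥ 0`, the `k` equilibrium-sum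
constraints hold, and the normalization `Σ θ(e,x,o)·w(e+x) = 1`. -/
noncomputable def LPfeasible (n k : ℕ) (w : ℕ → ℝ) (θ : ℕ × ℕ × ℕ → ℝ) : Prop :=
  (∀ p, 0 ≤ θ p) ∧
  (∀ ζ, 1 ≤ ζ → ζ ≤ k → 0 ≤ ∑ p ∈ Iset n, eqCoef n w ζ p * θ p) ∧
  ∑ p ∈ Iset n, θ p * w (p.1 + p.2.1) = 1

/-- The objective of the linear program (P): `Σ θ(e,x,o)·w(o+x)`. -/
noncomputable def LPobj (n : ℕ) (w : ℕ → ℝ) (θ : ℕ × ℕ × ℕ → ℝ) : ℝ :=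
  ∑ p ∈ Iset n, θ p * w (p.2.2 + p.2.1)

/-- The optimal value `P*(n,w,k)` of the linear program (P). -/
noncomputable def Pstar (n k : ℕ) (w : ℕ → ℝ) : ℝ :=
  sSup {x : ℝ | ∃ θ : ℕ × ℕ × ℕ → ℝ, LPfeasible n k w θ ∧ x = LPobj n w θ}

lemma mem_Iset_iff {n : ℕ} {p : ℕ × ℕ × ℕ} :
    p ∈ Iset n ↔ 1 ≤ p.1 + p.2.1 + p.2.2 ∧ p.1 + p.2.1 + p.2.2 ≤ n := by
  constructor
  · intro h; exact (Finset.mem_filter.mp h).2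
  · intro h
    refine Finset.mem_filter.mpr ⟨?_, h⟩
    simp only [Finset.mem_product, Finset.mem_range]
    omega

lemma eqCoef_one (n : ℕ) (w : ℕ → ℝ) (p : ℕ × ℕ × ℕ) :
    eqCoef n w 1 p = (n : ℝ) * w (p.1 + p.2.1)
      - (((n - p.1 - p.2.2 : ℕ) : ℝ) * w (p.1 + p.2.1)
        + (p.2.2 : ℝ) * w (p.1 + p.2.1 + 1) + (p.1 : ℝ) * w (p.1 + p.2.1 - 1)) := by
  obtain ⟨e, x, o⟩ := p
  simp [eqCoef, coefB, Finset.sum_range_succ]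

lemma eqCoef_zero (n ζ : ℕ) (w : ℕ → ℝ) : eqCoef n w ζ (0, 1, 0) = 0 := by
  unfold eqCoef
  rw [Finset.sum_eq_single 0, Finset.sum_eq_single 0]
  · simp [coefB]
  · intro b _ hb
    obtain ⟨b, rfl⟩ := Nat.exists_eq_succ_of_ne_zero hb
    simp [coefB]
  · intro h; simp at h
  · intro a _ ha
    obtain ⟨a, rfl⟩ := Nat.exists_eq_succ_of_ne_zero ha
    apply Finset.sum_eq_zero
    intro b _
    simp [coefB]
  · intro h; simp at h
/-- The linear program (P) is feasible, and its objective is bounded above on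
the feasible set (given `w(0) = 0` and `w(y) > 0` for `y > 0`). -/
theorem LP_feasible_and_bounded {n k : ℕ} (hn : 1 ≤ n) (hk1 : 1 ≤ k)
    (hkn : k ≤ n) (w : ℕ → ℝ) (hwnn : ∀ y, 0 ≤ w y) (hw0 : w 0 = 0)
    (hwpos : ∀ y, 0 < y → y ≤ n → 0 < w y) :
    (∃ θ : ℕ × ℕ × ℕ → ℝ, LPfeasible n k w θ) ∧
    ∃ B : ℝ, ∀ θ : ℕ × ℕ × ℕ → ℝ, LPfeasible n k w θ → LPobj n w θ ≤ B := by
  have hw1 : 0 < w 1 := hwpos 1 one_pos hn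
  have hmem : ((0, 1, 0) : ℕ × ℕ × ℕ) ∈ Iset n := by
    rw [mem_Iset_iff]
    exact ⟨by norm_num, by show 0 + 1 + 0 ≤ n; omega⟩
  constructor
  · -- feasibility
    refine ⟨fun p => if p = (0, 1, 0) then 1 / w 1 else 0, ?_, ?_, ?_⟩
    · intro p
      dsimp only
      split
      · positivity
      · exact le_refl 0
    · intro ζ _ _
      rw [Finset.sum_eq_single_of_mem (0, 1, 0) hmem]
      · simp [eqCoef_zero]
      · intro p _ hp; simp [hp]
    · rw [Finset.sum_eq_single_of_mem (0, 1, 0) hmem]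
      · simp; field_simp
      · intro p _ hp; simp [hp]
  · -- boundedness
    have hMne : ((Finset.range (n + 1)).image w).Nonempty :=
      ⟨w 0, Finset.mem_image_of_mem w (Finset.mem_range.mpr (by omega))⟩
    set M := ((Finset.range (n + 1)).image w).max' hMne with hMdef
    have hM : ∀ y, y ≤ n → w y ≤ M := fun y hy =>
      Finset.le_max' _ _ (Finset.mem_image_of_mem w (Finset.mem_range.mpr (by omega)))
    have hMnn : 0 ≤ M := le_trans (hwnn 0) (hM 0 (by omega))
    have hmne : ((Finset.Icc 1 n).image w).Nonempty :=
      ⟨w 1, Finset.mem_image_of_mem w (Finset.mem_Icc.mpr ⟨le_refl 1, hn⟩)⟩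
    set m := ((Finset.Icc 1 n).image w).min' hmne with hmdef
    have hm : ∀ y, 1 ≤ y → y ≤ n → m ≤ w y := fun y h1 h2 =>
      Finset.min'_le _ _ (Finset.mem_image_of_mem w (Finset.mem_Icc.mpr ⟨h1, h2⟩))
    have hmpos : 0 < m := by
      obtain ⟨y, hy, hyw⟩ := Finset.mem_image.mp (Finset.min'_mem _ hmne)
      rw [Finset.mem_Icc] at hy
      have h := hwpos y hy.1 hy.2
      rw [hmdef, ← hyw]
      exact h
    set K : ℝ := M / m + M * n / w 1 with hKdef
    have key : ∀ p ∈ Iset n,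
        w (p.2.2 + p.2.1) + (M / w 1) * eqCoef n w 1 p ≤ K * w (p.1 + p.2.1) := by
      rintro ⟨e, x, o⟩ hp
      obtain ⟨h1, h2⟩ := mem_Iset_iff.mp hp
      simp only at h1 h2 ⊢
      rw [eqCoef_one]
      simp only
      by_cases h : e + x = 0
      · have he : e = 0 := by omega
        have hx : x = 0 := by omega
        subst he; subst hx
        have ho1 : 1 ≤ o := by omega
        simp only [Nat.zero_add, Nat.add_zero, hw0]
        have hcalc : (M / w 1) * (0 - (((n - 0 - o : ℕ) : ℝ) * 0 + (o : ℝ) * w 1 + (0 : ℕ) * w 0)) = -(M * o) := by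
          field_simp
          ring
        have hwo : w o ≤ M := hM o (by omega)
        have hoM : M ≤ M * o := by
          have h1o : (1 : ℝ) ≤ (o : ℝ) := by exact_mod_cast ho1
          nlinarith
        have hKnn : 0 ≤ K := by positivity
        nlinarith [hwnn o]
      · have hex1 : 1 ≤ e + x := by omega
        have hexn : e + x ≤ n := by omega
        have hmw : m ≤ w (e + x) := hm _ hex1 hexn
        have hwox : w (o + x) ≤ M := hM _ (by omega)
        have hsub : (0 : ℝ) ≤ ((n - e - o : ℕ) : ℝ) * w (e + x) + (o : ℝ) * w (e + x + 1)
            + (e : ℝ) * w (e + x - 1) :=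
          add_nonneg (add_nonneg (mul_nonneg (Nat.cast_nonneg _) (hwnn _))
            (mul_nonneg (Nat.cast_nonneg _) (hwnn _))) (mul_nonneg (Nat.cast_nonneg _) (hwnn _))
        have hc2 : (0 : ℝ) ≤ M / w 1 := by positivity
        have hc1 : M ≤ (M / m) * w (e + x) := by
          rw [div_mul_eq_mul_div, le_div_iff₀ hmpos]
          nlinarith
        have hnc : (M / w 1) * ((n : ℝ) * w (e + x)) = (M * n / w 1) * w (e + x) := by
          ring
        nlinarith [mul_le_mul_of_nonneg_left hsub hc2]
    refine ⟨K, fun θ hθ => ?_⟩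
    obtain ⟨hθnn, hcon, hnorm⟩ := hθ
    have hS : 0 ≤ ∑ p ∈ Iset n, eqCoef n w 1 p * θ p := hcon 1 le_rfl hk1
    have step : LPobj n w θ ≤ ∑ p ∈ Iset n,
        (K * (θ p * w (p.1 + p.2.1)) - (M / w 1) * (eqCoef n w 1 p * θ p)) := by
      apply Finset.sum_le_sum
      intro p hp
      nlinarith [mul_le_mul_of_nonneg_right (key p hp) (hθnn p)]
    rw [Finset.sum_sub_distrib, ← Finset.mul_sum, ← Finset.mul_sum, hnorm] at step
    have hc2 : (0 : ℝ) ≤ M / w 1 := by positivity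
    refine step.trans ?_
    have h0 : 0 ≤ M / w 1 * ∑ p ∈ Iset n, eqCoef n w 1 p * θ p := mul_nonneg hc2 hS
    linarith
end
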